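/- Let G = (V, E_1, …, E_N) be an infinite, locally finite, connected edge-coloured graph with N colours, and fix p ∈ [0,1]^{N−1} and q ∈ [0,1]. Suppose that for every x ∈ V there is a finite set S_x ⊆ V with x ∈ S_x and ψ_{p,q}(x,S_x) < 1, and suppose moreover that M := sup_{x∈V} |S_x| < ∞ and θ₀ := sup_{x∈V} ψ_{p,q}(x,S_x) < 1. Then for every finite set A ⊆ V, χ(A) := sup_{u∈V} Σ_{v∈A} P_{p,q}(u ↔_A v) ≤ M / (1 − θ₀). -/

import Mathlib

open MeasureTheory ENNReal Set
open scoped Classical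

namespace InhomPerc

variable {V : Type*} {N : ℕ}

/-- The edge set of an edge-coloured graph: the union of all colour classes. -/
def Eset (E : Fin N → Set (Sym2 V)) : Set (Sym2 V) := ⋃ i, E i

/-- The colour classes are mutually disjoint. -/
def DisjointColours (E : Fin N → Set (Sym2 V)) : Prop :=
  ∀ i j : Fin N, i ≠ j → Disjoint (E i) (E j)

/-- Every edge is a pair of two *distinct* vertices. -/
def NoLoops (E : Fin N → Set (Sym2 V)) : Prop := ∀ e ∈ Eset E, ¬ e.IsDiag

/-- The underlying simple graph of the edge-coloured graph. -/
def graph (E : Fin N → Set (Sym2 V)) : SimpleGraph V where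
  Adj u v := u ≠ v ∧ s(u, v) ∈ Eset E
  symm := by
    refine ⟨fun u v h => ?_⟩
    refine ⟨h.1.symm, ?_⟩
    rw [Sym2.eq_swap]
    exact h.2
  loopless := ⟨fun v h => h.1 rfl⟩

/-- Local finiteness: every vertex lies in finitely many edges. -/
def LocFin (E : Fin N → Set (Sym2 V)) : Prop :=
  ∀ v : V, {e ∈ Eset E | v ∈ e}.Finite

/-- Connectivity of the edge-coloured graph. -/
def ConnectedGraph (E : Fin N → Set (Sym2 V)) : Prop := (graph E).Connected

/-- Quasi-transitivity: the vertices can be partitioned into finitely many classes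
such that vertices in the same class are related by a coloured graph automorphism. -/
def QuasiTransitive (E : Fin N → Set (Sym2 V)) : Prop :=
  ∃ (k : ℕ) (c : V → Fin k), ∀ u v : V, c u = c v →
    ∃ f : V ≃ V, (∀ (i : Fin N) (e : Sym2 V), e ∈ E i ↔ e.map f ∈ E i) ∧ f v = u

/-- Graph distance. -/
noncomputable def dist (E : Fin N → Set (Sym2 V)) (u v : V) : ℕ := (graph E).dist u v

/-- Percolation configurations: each (potential) edge is open (`true`) or closed. -/
abbrev Config (V : Type*) := Sym2 V → Bool

/-- `x` is joined to `y` by a path of open edges all of whose endpoints lie in `S`. -/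
def ConnIn (E : Fin N → Set (Sym2 V)) (ω : Config V) (S : Set V) (x y : V) : Prop :=
  Relation.ReflTransGen
    (fun a b => a ∈ S ∧ b ∈ S ∧ s(a, b) ∈ Eset E ∧ ω s(a, b) = true) x y

/-- The open cluster of `x`. -/
def cluster (E : Fin N → Set (Sym2 V)) (ω : Config V) (x : V) : Set V :=
  {y | ConnIn E ω Set.univ x y}

/-- The retention probability of an edge `e` under the parameter vector `r`:
`r i` for an edge of colour `i`, `0` for non-edges (by disjointness at most one
summand is nonzero). -/
noncomputable def edgeProb (E : Fin N → Set (Sym2 V)) (r : Fin N → ℝ) (e : Sym2 V) : ℝ :=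
  ∑ i : Fin N, if e ∈ E i then r i else 0

/-- `P` is the family of inhomogeneous percolation (product) measures: for each valid
parameter vector `r` it is a probability measure whose cylinder probabilities are the
products of the individual edge-retention probabilities. -/
def IsPercFamily (E : Fin N → Set (Sym2 V)) (P : (Fin N → ℝ) → Measure (Config V)) : Prop :=
  ∀ r : Fin N → ℝ, (∀ i, r i ∈ Icc (0 : ℝ) 1) →
    IsProbabilityMeasure (P r) ∧
    ∀ (F : Finset (Sym2 V)) (σ : Sym2 V → Bool),
      P r {ω | ∀ e ∈ F, ω e = σ e} =
        ∏ e ∈ F, ENNReal.ofReal (if σ e then edgeProb E r e else 1 - edgeProb E r e)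

/-- The full parameter vector `(p₁, …, p_{N-1}, q)`. -/
noncomputable def pFull (N : ℕ) (p : Fin (N - 1) → ℝ) (q : ℝ) : Fin N → ℝ :=
  fun i => if h : (i : ℕ) < N - 1 then p ⟨i, h⟩ else q

/-- The percolation function `θ`. -/
noncomputable def theta (E : Fin N → Set (Sym2 V)) (P : (Fin N → ℝ) → Measure (Config V))
    (r : Fin N → ℝ) : ℝ≥0∞ :=
  ⨆ x : V, P r {ω | (cluster E ω x).Infinite}

/-- The susceptibility `χ`. -/
noncomputable def chi (E : Fin N → Set (Sym2 V)) (P : (Fin N → ℝ) → Measure (Config V))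
    (r : Fin N → ℝ) : ℝ≥0∞ :=
  ⨆ x : V, ∫⁻ ω, ((cluster E ω x).encard : ℝ≥0∞) ∂(P r)

/-- The `θ`-critical surface. -/
noncomputable def qTheta (E : Fin N → Set (Sym2 V)) (P : (Fin N → ℝ) → Measure (Config V))
    (p : Fin (N - 1) → ℝ) : ℝ :=
  sInf (insert (1 : ℝ) {q | q ∈ Icc (0 : ℝ) 1 ∧ 0 < theta E P (pFull N p q)})

/-- The `χ`-critical surface. -/
noncomputable def qChi (E : Fin N → Set (Sym2 V)) (P : (Fin N → ℝ) → Measure (Config V))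
    (p : Fin (N - 1) → ℝ) : ℝ :=
  sInf (insert (1 : ℝ) {q | q ∈ Icc (0 : ℝ) 1 ∧ chi E P (pFull N p q) = ⊤})

/-- `ψ_{p,q}(x,S) = Σᵢ pᵢ Σ_{{y,z} ∈ ΔS ∩ Eᵢ} P(x ↔_S y)` (each boundary edge
is enumerated by its unique orientation `y ∈ S`, `z ∉ S`). -/
noncomputable def psi (E : Fin N → Set (Sym2 V)) (P : (Fin N → ℝ) → Measure (Config V))
    (r : Fin N → ℝ) (x : V) (S : Finset V) : ℝ≥0∞ :=
  ∑ i : Fin N, ENNReal.ofReal (r i) *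
    ∑ y ∈ S, ∑' z : V,
      (if z ∉ S ∧ s(y, z) ∈ E i then P r {ω | ConnIn E ω ↑S x y} else 0)

/-- The `ψ`-critical surface. -/
noncomputable def qPsi (E : Fin N → Set (Sym2 V)) (P : (Fin N → ℝ) → Measure (Config V))
    (p : Fin (N - 1) → ℝ) : ℝ :=
  sSup {q | q ∈ Icc (0 : ℝ) 1 ∧
    ∀ x : V, ∃ S : Finset V, x ∈ S ∧ psi E P (pFull N p q) x S < 1}

/-- The event that `x` is joined by an open path to `∂Λ_k^x` (the set of vertices
at graph distance exactly `k` from `x`). -/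
def ConnSphere (E : Fin N → Set (Sym2 V)) (ω : Config V) (x : V) (k : ℕ) : Prop :=
  ∃ y : V, dist E x y = k ∧ ConnIn E ω Set.univ x y

end InhomPerc

/-!
Write `χ_A(u) = Σ_{v ∈ A} P(u ↔_A v)` and `X = sup_u χ_A(u)`, which is at most `|A| < ∞`.
Fix `u ∈ A` and `S = S_u`. The vertices `v ∈ A ∩ S` contribute at most `|S| ≤ M`. For `v ∈ A \ S`,
decompose according to the open cluster `C` of `u` inside `S ∩ A`: an open path from `u` to `v` in
`A` leaves `C` for the last time through an open edge `{y, z}` with `y ∈ C`, `z ∈ A \ S`, and then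
runs from `z` to `v` inside `A \ C`. These three events read disjoint sets of edges, so they are
independent, and summing over `C` gives
`P(u ↔_A v) ≤ Σ_{y, z} P(u ↔_S y) P({y, z} open) P(z ↔_A v)`.
Summing over `v` yields `χ_A(u) ≤ M + ψ(u, S_u) X ≤ M + θ₀ X`, hence `X ≤ M / (1 - θ₀)`.
-/

open ProbabilityTheory

section Independence

variable {ι : Type*} {μ : Measure (ι → Bool)}

theorem dependsOn_mem_inter [DecidableEq ι] {F G : Finset ι} {s t : Set (ι → Bool)}
    (hs : DependsOn (· ∈ s) ↑F) (ht : DependsOn (· ∈ t) ↑G) :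
    DependsOn (· ∈ s ∩ t) ↑(F ∪ G) := fun _ _ h =>
  congrArg₂ (· ∧ ·) (hs fun i hi => h i (by simp [hi])) (ht fun i hi => h i (by simp [hi]))

theorem DependsOn.preimage_image_restrict {F : Finset ι} {s : Set (ι → Bool)}
    (hs : DependsOn (· ∈ s) ↑F) :
    (fun ω (i : F) => ω i) ⁻¹' ((fun ω (i : F) => ω i) '' s) = s := by
  refine Subset.antisymm ?_ (subset_preimage_image _ _)
  rintro ω ⟨ω', hω', heq⟩
  exact (hs fun i hi => congrFun heq ⟨i, hi⟩).mp hω'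

theorem DependsOn.measurableSet {F : Finset ι} {s : Set (ι → Bool)}
    (hs : DependsOn (· ∈ s) ↑F) : MeasurableSet s := by
  rw [← hs.preimage_image_restrict]
  exact measurable_pi_lambda _ (fun _ => measurable_pi_apply _) .of_discrete

theorem iIndepFun_eval_of_measure_cylinder [IsProbabilityMeasure μ] (w : ι → Bool → ℝ≥0∞)
    (hcyl : ∀ (F : Finset ι) (σ : ι → Bool),
      μ {ω | ∀ i ∈ F, ω i = σ i} = ∏ i ∈ F, w i (σ i)) :
    iIndepFun (fun i ω => ω i) μ := by
  refine iIndepFun_iff_finset.2 fun F => ?_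
  refine (iIndepFun_iff_map_fun_eq_pi_map (f := F.restrict fun i (ω : ι → Bool) => ω i)
    fun _ => (measurable_pi_apply _).aemeasurable).2 (Measure.ext_of_singleton fun σ => ?_)
  have hcoord : ∀ (i : ι) (b : Bool), μ.map (fun ω => ω i) {b} = w i b := fun i b => by
    rw [Measure.map_apply (measurable_pi_apply i) (measurableSet_singleton b),
      show (fun ω : ι → Bool => ω i) ⁻¹' {b} = {ω | ∀ j ∈ ({i} : Finset ι), ω j = b} by
      ext; simp, hcyl]
    simp
  simp only [Finset.restrict]
  rw [Measure.map_apply (measurable_pi_lambda _ fun _ => measurable_pi_apply _)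
    (measurableSet_singleton σ), Measure.pi_singleton]
  simp only [hcoord]
  let σ' : ι → Bool := fun i => if h : i ∈ F then σ ⟨i, h⟩ else false
  have hpre : (fun (ω : ι → Bool) (i : F) => ω i) ⁻¹' {σ} = {ω | ∀ i ∈ F, ω i = σ' i} := by
    ext ω
    simp +contextual [σ', funext_iff]
  rw [hpre, hcyl, ← Finset.prod_coe_sort]
  simp [σ']

theorem measure_inter_eq_mul_of_dependsOn (hμ : iIndepFun (fun i ω => ω i) μ) {F G : Finset ι}
    (hFG : Disjoint F G) {s t : Set (ι → Bool)} (hs : DependsOn (· ∈ s) ↑F)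
    (ht : DependsOn (· ∈ t) ↑G) : μ (s ∩ t) = μ s * μ t := by
  rw [← hs.preimage_image_restrict, ← ht.preimage_image_restrict]
  exact (hμ.indepFun_finset F G hFG measurable_pi_apply).measure_inter_preimage_eq_mul _ _
    .of_discrete .of_discrete

end Independence

namespace Relation.ReflTransGen

variable {α : Type*} {R R' : α → α → Prop} {C : Set α} {a b : α}

theorem exists_last_exit (h : ReflTransGen R a b) (ha : a ∈ C) (hb : b ∉ C) :
    ∃ y z, y ∈ C ∧ z ∉ C ∧ R y z ∧
      ReflTransGen (fun c d => R c d ∧ c ∉ C ∧ d ∉ C) z b := by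
  induction h with
  | refl => exact absurd ha hb
  | @tail c d _ hcd ih =>
    by_cases hc : c ∈ C
    · exact ⟨c, d, hc, hb, hcd, .refl⟩
    · obtain ⟨y, z, hy, hz, hyz, hzc⟩ := ih hc
      exact ⟨y, z, hy, hz, hyz, hzc.tail ⟨hcd, hc, hb⟩⟩

theorem mem_and_of_forall_mem (h : ReflTransGen R a b) (ha : a ∈ C)
    (hC : ∀ x ∈ C, ∀ y, R x y → y ∈ C ∧ R' x y) : b ∈ C ∧ ReflTransGen R' a b := by
  induction h with
  | refl => exact ⟨ha, .refl⟩
  | tail _ hcd ih =>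
    obtain ⟨hc, hac⟩ := ih
    obtain ⟨hd, hcd'⟩ := hC _ hc _ hcd
    exact ⟨hd, hac.tail hcd'⟩

end Relation.ReflTransGen

theorem Relation.reflTransGen_iff_of_forall_mem {α : Type*} {R R' : α → α → Prop} {C : Set α}
    {a b : α} (ha : a ∈ C) (hC : ∀ x ∈ C, ∀ y, R x y → y ∈ C)
    (hRR' : ∀ x ∈ C, ∀ y, R x y ↔ R' x y) : ReflTransGen R a b ↔ ReflTransGen R' a b :=
  ⟨fun h => (h.mem_and_of_forall_mem ha fun x hx y hxy => ⟨hC x hx y hxy, (hRR' x hx y).1 hxy⟩).2,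
    fun h => (h.mem_and_of_forall_mem ha fun x hx y hxy =>
      ⟨hC x hx y ((hRR' x hx y).2 hxy), (hRR' x hx y).2 hxy⟩).2⟩

theorem ENNReal.le_div_one_sub_of_le_add_mul {x m θ : ℝ≥0∞} (hx : x ≠ ⊤) (hθ : θ < 1)
    (h : x ≤ m + θ * x) : x ≤ m / (1 - θ) := by
  have hθx : θ * x ≠ ⊤ := mul_ne_top hθ.ne_top hx
  rw [ENNReal.le_div_iff_mul_le (.inl (tsub_pos_of_lt hθ).ne') (.inl (sub_ne_top one_ne_top)),
    ENNReal.mul_sub fun _ _ => hx, mul_one, mul_comm]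
  calc x - θ * x ≤ m + θ * x - θ * x := tsub_le_tsub_right h _
    _ = m := ENNReal.add_sub_cancel_right hθx

namespace InhomPerc

variable {V : Type*} {N : ℕ} {E : Fin N → Set (Sym2 V)} {ω : Config V} {S T A C : Finset V}
  {u v x y : V}

def clusterIn (E : Fin N → Set (Sym2 V)) (ω : Config V) (S : Set V) (x : V) : Set V :=
  {y | ConnIn E ω S x y}

theorem ConnIn.mono {S S' : Set V} (hS : S ⊆ S') (h : ConnIn E ω S x y) : ConnIn E ω S' x y :=
  Relation.ReflTransGen.mono (fun _ _ hab => ⟨hS hab.1, hS hab.2.1, hab.2.2⟩) _ _ h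

theorem ConnIn.mem_of_mem {S : Set V} (h : ConnIn E ω S x y) (hx : x ∈ S) : y ∈ S := by
  rcases h.cases_tail with rfl | ⟨_, _, hstep⟩
  exacts [hx, hstep.2.1]

theorem ConnIn.eq_of_notMem {S : Set V} (h : ConnIn E ω S x y) (hx : x ∉ S) : y = x := by
  rcases h.cases_head with rfl | ⟨_, hstep, _⟩
  exacts [rfl, absurd hstep.1 hx]

theorem dependsOn_connIn (W : Finset V) (x y : V) :
    DependsOn (· ∈ {ω : Config V | ConnIn E ω ↑W x y}) ↑W.sym2 := fun ω ω' h => by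
  refine propext (Relation.reflTransGen_iff_of_forall_mem (C := Set.univ) trivial
    (fun _ _ _ _ => trivial) fun a _ b => ?_)
  refine and_congr_right fun ha => and_congr_right fun hb => and_congr_right fun _ => ?_
  rw [h _ (Finset.mk_mem_sym2_iff.2 ⟨ha, hb⟩)]

theorem dependsOn_clusterIn_eq (T C : Finset V) (u : V) :
    DependsOn (· ∈ {ω : Config V | clusterIn E ω ↑T u = ↑C})
      ↑(T.sym2.filter fun e => ∃ a ∈ C, a ∈ e) := by
  suffices h : ∀ ω ω' : Config V, (∀ e ∈ T.sym2.filter fun e => ∃ a ∈ C, a ∈ e, ω e = ω' e) →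
      clusterIn E ω ↑T u = ↑C → clusterIn E ω' ↑T u = ↑C from
    fun ω ω' hag => propext ⟨h ω ω' hag, h ω' ω fun e he => (hag e he).symm⟩
  intro ω ω' hag hω
  have hu : u ∈ (C : Set V) := hω ▸ Relation.ReflTransGen.refl
  have hclosed : ∀ a ∈ (C : Set V), ∀ b, a ∈ (T : Set V) → b ∈ (T : Set V) →
      s(a, b) ∈ Eset E → ω s(a, b) = true → b ∈ (C : Set V) := by
    intro a ha b haT hbT he ho
    rw [← hω] at ha ⊢
    exact Relation.ReflTransGen.tail ha ⟨haT, hbT, he, ho⟩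
  have hagree : ∀ a ∈ (C : Set V), ∀ b, a ∈ (T : Set V) → b ∈ (T : Set V) →
      ω s(a, b) = ω' s(a, b) := fun a ha b haT hbT =>
    hag _ (Finset.mem_filter.2 ⟨Finset.mk_mem_sym2_iff.2 ⟨haT, hbT⟩, a, ha, Sym2.mem_mk_left a b⟩)
  rw [← hω]
  ext w
  refine (Relation.reflTransGen_iff_of_forall_mem hu ?_ ?_).symm
  · rintro a ha b ⟨haT, hbT, he, ho⟩
    exact hclosed a ha b haT hbT he ho
  · rintro a ha b
    refine and_congr_right fun haT => and_congr_right fun hbT => and_congr_right fun _ => ?_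
    rw [hagree a ha b haT hbT]

theorem clusterIn_subset {S : Set V} (hu : u ∈ S) : clusterIn E ω S u ⊆ S :=
  fun _ h => ConnIn.mem_of_mem h hu

theorem clusterIn_eq_inter_connIn_subset (hCT : C ⊆ T) (hv : v ∉ C) :
    {ω | clusterIn E ω ↑T u = ↑C} ∩ {ω | ConnIn E ω ↑A u v} ⊆
      ⋃ y ∈ C, ⋃ z ∈ A \ T, {ω | clusterIn E ω ↑T u = ↑C} ∩ {ω | ω s(y, z) = true} ∩
        {ω | ConnIn E ω ↑(A \ C) z v} := by
  rintro ω ⟨hω, hconn⟩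
  have hu : u ∈ (C : Set V) := hω ▸ Relation.ReflTransGen.refl
  obtain ⟨y, z, hy, hz, ⟨-, hzA, he, ho⟩, hzv⟩ :=
    Relation.ReflTransGen.exists_last_exit hconn hu (Finset.mem_coe.not.2 hv)
  have hzT : z ∉ T := fun hzT => hz <| by
    have hyT : y ∈ T := hCT hy
    rw [← hω] at hy ⊢
    exact Relation.ReflTransGen.tail hy ⟨hyT, hzT, he, ho⟩
  simp only [mem_iUnion]
  refine ⟨y, hy, z, Finset.mem_sdiff.2 ⟨hzA, hzT⟩, ⟨hω, ho⟩, ?_⟩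
  refine Relation.ReflTransGen.mono (fun c d ⟨⟨hc, hd, hcd, hocd⟩, hcC, hdC⟩ => ?_) _ _ hzv
  rw [Finset.coe_sdiff]
  exact ⟨⟨hc, hcC⟩, ⟨hd, hdC⟩, hcd, hocd⟩

section Independent

variable {μ : Measure (Config V)} (hμ : iIndepFun (fun e ω => ω e) μ)
include hμ

theorem measure_clusterIn_eq_inter_connIn_le (hCT : C ⊆ T) (hv : v ∉ C) :
    μ ({ω | clusterIn E ω ↑T u = ↑C} ∩ {ω | ConnIn E ω ↑A u v}) ≤
      ∑ y ∈ C, ∑ z ∈ A \ T, μ {ω | clusterIn E ω ↑T u = ↑C} * μ {ω | ω s(y, z) = true} *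
        μ {ω | ConnIn E ω ↑A z v} := by
  refine (measure_mono (clusterIn_eq_inter_connIn_subset hCT hv)).trans <|
    (measure_biUnion_finset_le _ _).trans <| Finset.sum_le_sum fun y hy =>
      (measure_biUnion_finset_le _ _).trans <| Finset.sum_le_sum fun z hz => ?_
  obtain ⟨hzA, hzT⟩ := Finset.mem_sdiff.1 hz
  have hcluster := dependsOn_clusterIn_eq (E := E) T C u
  have hedge : DependsOn (· ∈ {ω : Config V | ω s(y, z) = true}) ↑({s(y, z)} : Finset _) :=
    fun _ _ h => congrArg (· = true) (h _ (Finset.mem_singleton_self _))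
  have hdisj₁ : Disjoint (T.sym2.filter fun e => ∃ a ∈ C, a ∈ e) {s(y, z)} := by
    refine Finset.disjoint_singleton_right.2 fun h => hzT ?_
    exact Finset.mem_sym2_iff.1 (Finset.mem_filter.1 h).1 z (Sym2.mem_mk_right y z)
  have hdisj₂ : Disjoint ((T.sym2.filter fun e => ∃ a ∈ C, a ∈ e) ∪ {s(y, z)}) (A \ C).sym2 := by
    refine Finset.disjoint_left.2 fun e he heA => ?_
    obtain ⟨a, haC, hae⟩ : ∃ a ∈ C, a ∈ e := by
      rcases Finset.mem_union.1 he with he | he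
      · exact (Finset.mem_filter.1 he).2
      · exact ⟨y, hy, Finset.mem_singleton.1 he ▸ Sym2.mem_mk_left y z⟩
    exact (Finset.mem_sdiff.1 (Finset.mem_sym2_iff.1 heA a hae)).2 haC
  rw [measure_inter_eq_mul_of_dependsOn hμ hdisj₂ (dependsOn_mem_inter hcluster hedge)
    (dependsOn_connIn _ _ _), measure_inter_eq_mul_of_dependsOn hμ hdisj₁ hcluster hedge]
  gcongr with ω
  exact ConnIn.mono (Finset.coe_subset.2 Finset.sdiff_subset)

theorem measure_connIn_le_sum_exit (hu : u ∈ T) (hv : v ∉ T) :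
    μ {ω | ConnIn E ω ↑A u v} ≤
      ∑ y ∈ T, ∑ z ∈ A \ T, μ {ω | ConnIn E ω ↑T u y} * μ {ω | ω s(y, z) = true} *
        μ {ω | ConnIn E ω ↑A z v} := by
  have hcover : {ω | ConnIn E ω ↑A u v} ⊆ ⋃ C ∈ T.powerset,
      {ω | clusterIn E ω ↑T u = ↑C} ∩ {ω | ConnIn E ω ↑A u v} := fun ω hω =>
    mem_biUnion (x := T.filter (· ∈ clusterIn E ω ↑T u))
      (Finset.mem_powerset.2 (Finset.filter_subset _ _))
      ⟨by
        ext x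
        simpa using fun hx => clusterIn_subset (E := E) (Finset.mem_coe.2 hu) hx, hω⟩
  have hclusters : ∀ y, ∑ C ∈ T.powerset with y ∈ C, μ {ω | clusterIn E ω ↑T u = ↑C} ≤
      μ {ω | ConnIn E ω ↑T u y} := fun y => by
    rw [← measure_biUnion_finset (fun C₁ _ C₂ _ h => disjoint_left.2 fun ω h₁ h₂ =>
        h (Finset.coe_injective (h₁.symm.trans h₂)))
      (fun C _ => (dependsOn_clusterIn_eq T C u).measurableSet)]
    refine measure_mono (iUnion₂_subset fun C hC ω hω => ?_)
    change y ∈ clusterIn E ω ↑T u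
    rw [show clusterIn E ω ↑T u = ↑C from hω]
    exact (Finset.mem_filter.1 hC).2
  calc μ {ω | ConnIn E ω ↑A u v}
      ≤ ∑ C ∈ T.powerset, μ ({ω | clusterIn E ω ↑T u = ↑C} ∩ {ω | ConnIn E ω ↑A u v}) :=
        (measure_mono hcover).trans (measure_biUnion_finset_le _ _)
    _ ≤ ∑ C ∈ T.powerset, ∑ y ∈ C, ∑ z ∈ A \ T, μ {ω | clusterIn E ω ↑T u = ↑C} *
          μ {ω | ω s(y, z) = true} * μ {ω | ConnIn E ω ↑A z v} :=
        Finset.sum_le_sum fun C hC => measure_clusterIn_eq_inter_connIn_le hμ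
          (Finset.mem_powerset.1 hC) fun hvC => hv (Finset.mem_powerset.1 hC hvC)
    _ = ∑ y ∈ T, ∑ z ∈ A \ T, (∑ C ∈ T.powerset with y ∈ C, μ {ω | clusterIn E ω ↑T u = ↑C}) *
          μ {ω | ω s(y, z) = true} * μ {ω | ConnIn E ω ↑A z v} := by
        rw [Finset.sum_comm' (t' := T) (s' := fun y => T.powerset.filter (y ∈ ·))]
        · simp only [Finset.sum_mul]
          exact Finset.sum_congr rfl fun y _ => Finset.sum_comm
        · intro C y
          simp only [Finset.mem_powerset, Finset.mem_filter]
          exact ⟨fun ⟨hCT, hy⟩ => ⟨⟨hCT, hy⟩, hCT hy⟩, fun ⟨⟨hCT, hy⟩, _⟩ => ⟨hCT, hy⟩⟩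
    _ ≤ _ := by gcongr with y; exact hclusters y

end Independent

section Percolation

variable {P : (Fin N → ℝ) → Measure (Config V)} {r : Fin N → ℝ}

theorem pFull_mem_Icc {p : Fin (N - 1) → ℝ} {q : ℝ} (hp : ∀ i, p i ∈ Icc (0 : ℝ) 1)
    (hq : q ∈ Icc (0 : ℝ) 1) (i : Fin N) : pFull N p q i ∈ Icc (0 : ℝ) 1 := by
  unfold pFull
  split_ifs
  exacts [hp _, hq]

theorem IsPercFamily.measure_open (hP : IsPercFamily E P) (hr : ∀ i, r i ∈ Icc (0 : ℝ) 1)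
    (e : Sym2 V) : P r {ω | ω e = true} = ENNReal.ofReal (edgeProb E r e) := by
  simpa using (hP r hr).2 {e} fun _ => true

theorem IsPercFamily.iIndepFun (hP : IsPercFamily E P) (hr : ∀ i, r i ∈ Icc (0 : ℝ) 1) :
    iIndepFun (fun e ω => ω e) (P r) :=
  have := (hP r hr).1
  iIndepFun_eval_of_measure_cylinder
    (fun e b => ENNReal.ofReal (if b then edgeProb E r e else 1 - edgeProb E r e)) (hP r hr).2

theorem ofReal_edgeProb (hr : ∀ i, 0 ≤ r i) (e : Sym2 V) :
    ENNReal.ofReal (edgeProb E r e) = ∑ i, if e ∈ E i then ENNReal.ofReal (r i) else 0 := by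
  rw [edgeProb, ENNReal.ofReal_sum_of_nonneg fun i _ => by split_ifs <;> simp [hr i]]
  simp only [apply_ite ENNReal.ofReal, ENNReal.ofReal_zero]

theorem sum_mul_edgeProb_le_psi (hr : ∀ i, 0 ≤ r i) {Z : Finset V} (hZ : Disjoint Z S) :
    ∑ y ∈ S, ∑ z ∈ Z, P r {ω | ConnIn E ω ↑S u y} * ENNReal.ofReal (edgeProb E r s(y, z)) ≤
      psi E P r u S := by
  calc ∑ y ∈ S, ∑ z ∈ Z, P r {ω | ConnIn E ω ↑S u y} * ENNReal.ofReal (edgeProb E r s(y, z))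
      = ∑ i, ENNReal.ofReal (r i) * ∑ y ∈ S, ∑ z ∈ Z,
          if z ∉ S ∧ s(y, z) ∈ E i then P r {ω | ConnIn E ω ↑S u y} else 0 := by
        simp only [ofReal_edgeProb hr, Finset.mul_sum]
        rw [(Finset.sum_congr rfl fun y _ => Finset.sum_comm).trans Finset.sum_comm]
        refine Finset.sum_congr rfl fun i _ => Finset.sum_congr rfl fun y _ =>
          Finset.sum_congr rfl fun z hz => ?_
        have hzS : z ∉ S := Finset.disjoint_left.1 hZ hz
        by_cases he : s(y, z) ∈ E i <;> simp [he, hzS, mul_comm]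
    _ ≤ psi E P r u S := by
        unfold psi
        gcongr
        exact ENNReal.sum_le_tsum _

theorem sum_sdiff_connIn_le_psi_mul (hP : IsPercFamily E P) (hr : ∀ i, r i ∈ Icc (0 : ℝ) 1)
    (hu : u ∈ S) (huA : u ∈ A) :
    ∑ v ∈ A \ S, P r {ω | ConnIn E ω ↑A u v} ≤
      psi E P r u S * ⨆ z, ∑ v ∈ A, P r {ω | ConnIn E ω ↑A z v} := by
  set X := ⨆ z, ∑ v ∈ A, P r {ω | ConnIn E ω ↑A z v}
  have hX : ∀ z, ∑ v ∈ A \ S, P r {ω | ConnIn E ω ↑A z v} ≤ X := fun z =>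
    (Finset.sum_le_sum_of_subset Finset.sdiff_subset).trans
      (le_iSup (fun z => ∑ v ∈ A, P r {ω | ConnIn E ω ↑A z v}) z)
  calc ∑ v ∈ A \ S, P r {ω | ConnIn E ω ↑A u v}
      ≤ ∑ v ∈ A \ S, ∑ y ∈ S ∩ A, ∑ z ∈ A \ S, P r {ω | ConnIn E ω ↑(S ∩ A) u y} *
          P r {ω | ω s(y, z) = true} * P r {ω | ConnIn E ω ↑A z v} := by
        refine Finset.sum_le_sum fun v hv => ?_
        rw [← Finset.sdiff_inter_self_right A S]
        exact measure_connIn_le_sum_exit (hP.iIndepFun hr) (Finset.mem_inter.2 ⟨hu, huA⟩)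
          fun hv' => (Finset.mem_sdiff.1 hv).2 (Finset.mem_inter.1 hv').1
    _ = ∑ y ∈ S ∩ A, ∑ z ∈ A \ S, P r {ω | ConnIn E ω ↑(S ∩ A) u y} *
          P r {ω | ω s(y, z) = true} * ∑ v ∈ A \ S, P r {ω | ConnIn E ω ↑A z v} := by
        rw [Finset.sum_comm]
        simp_rw [Finset.mul_sum]
        exact Finset.sum_congr rfl fun _ _ => Finset.sum_comm
    _ ≤ ∑ y ∈ S, ∑ z ∈ A \ S, P r {ω | ConnIn E ω ↑S u y} *
          ENNReal.ofReal (edgeProb E r s(y, z)) * X := by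
        refine Finset.sum_le_sum_of_subset_of_nonneg Finset.inter_subset_left (fun _ _ _ => zero_le)
          |>.trans' (Finset.sum_le_sum fun y _ => Finset.sum_le_sum fun z _ => ?_)
        rw [hP.measure_open hr]
        gcongr
        · exact ConnIn.mono (Finset.coe_subset.2 Finset.inter_subset_left)
        · exact hX z
    _ ≤ psi E P r u S * X := by
        simp_rw [← Finset.sum_mul]
        gcongr
        exact sum_mul_edgeProb_le_psi (fun i => (hr i).1) Finset.sdiff_disjoint

theorem sum_connIn_le_card_add_psi_mul (hP : IsPercFamily E P) (hr : ∀ i, r i ∈ Icc (0 : ℝ) 1)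
    (hu : u ∈ S) :
    ∑ v ∈ A, P r {ω | ConnIn E ω ↑A u v} ≤
      S.card + psi E P r u S * ⨆ z, ∑ v ∈ A, P r {ω | ConnIn E ω ↑A z v} := by
  have := (hP r hr).1
  by_cases huA : u ∈ A
  · rw [← Finset.sum_inter_add_sum_sdiff A S]
    refine add_le_add ?_ (sum_sdiff_connIn_le_psi_mul hP hr hu huA)
    calc ∑ v ∈ A ∩ S, P r {ω | ConnIn E ω ↑A u v} ≤ (A ∩ S).card := by
          simpa using Finset.sum_le_card_nsmul (A ∩ S) _ 1 fun _ _ => prob_le_one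
      _ ≤ S.card := by gcongr; exact Finset.inter_subset_right
  · refine (Finset.sum_eq_zero fun v hv => measure_mono_null (fun ω h => ?_) measure_empty).trans_le
      zero_le
    exact huA (ConnIn.eq_of_notMem h (Finset.mem_coe.not.2 huA) ▸ hv)

end Percolation

theorem restricted_susceptibility_bound_general
    {V : Type*} {N : ℕ}
    (E : Fin N → Set (Sym2 V))
    (P : (Fin N → ℝ) → Measure (Config V)) (hP : IsPercFamily E P)
    (p : Fin (N - 1) → ℝ) (hp : ∀ i, p i ∈ Icc (0 : ℝ) 1)
    (q : ℝ) (hq : q ∈ Icc (0 : ℝ) 1)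
    (Sx : V → Finset V) (hSx : ∀ x : V, x ∈ Sx x)
    (M θ₀ : ℝ≥0∞)
    (hM : M = ⨆ x : V, ((Sx x).card : ℝ≥0∞))
    (hθ : θ₀ = ⨆ x : V, psi E P (pFull N p q) x (Sx x)) (hθlt : θ₀ < 1) :
    ∀ A : Finset V,
      (⨆ u : V, ∑ v ∈ A, P (pFull N p q) {ω | ConnIn E ω ↑A u v}) ≤ M / (1 - θ₀) := by
  intro A
  have hr := pFull_mem_Icc hp hq
  have := (hP _ hr).1
  refine ENNReal.le_div_one_sub_of_le_add_mul ?_ hθlt (iSup_le fun u => ?_)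
  · refine ne_top_of_le_ne_top (natCast_ne_top A.card) (iSup_le fun u => ?_)
    simpa using Finset.sum_le_card_nsmul A _ 1 fun _ _ => prob_le_one
  · refine (sum_connIn_le_card_add_psi_mul hP hr (hSx u)).trans ?_
    gcongr
    · exact hM ▸ le_iSup (fun x => ((Sx x).card : ℝ≥0∞)) u
    · exact hθ ▸ le_iSup (fun x => psi E P (pFull N p q) x (Sx x)) u

/-- If every vertex `x` has a finite set `S_x ∋ x` with `ψ(x,S_x) < 1`,
`M := sup_x |S_x| < ∞` and `θ₀ := sup_x ψ(x,S_x) < 1`, then for every finite `A`,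
`χ(A) := sup_u Σ_{v∈A} P(u ↔_A v) ≤ M / (1 - θ₀)`. -/
theorem restricted_susceptibility_bound
    {V : Type*} [Countable V] [Infinite V] {N : ℕ} (hN : 0 < N)
    (E : Fin N → Set (Sym2 V))
    (hdisj : DisjointColours E) (hloops : NoLoops E)
    (hlf : LocFin E) (hconn : ConnectedGraph E)
    (P : (Fin N → ℝ) → Measure (Config V)) (hP : IsPercFamily E P)
    (p : Fin (N - 1) → ℝ) (hp : ∀ i, p i ∈ Icc (0 : ℝ) 1)
    (q : ℝ) (hq : q ∈ Icc (0 : ℝ) 1)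
    (Sx : V → Finset V) (hSx : ∀ x : V, x ∈ Sx x)
    (hpsi : ∀ x : V, psi E P (pFull N p q) x (Sx x) < 1)
    (M θ₀ : ℝ≥0∞)
    (hM : M = ⨆ x : V, ((Sx x).card : ℝ≥0∞)) (hMfin : M ≠ ⊤)
    (hθ : θ₀ = ⨆ x : V, psi E P (pFull N p q) x (Sx x)) (hθlt : θ₀ < 1) :
    ∀ A : Finset V,
      (⨆ u : V, ∑ v ∈ A, P (pFull N p q) {ω | ConnIn E ω ↑A u v}) ≤ M / (1 - θ₀) :=
  restricted_susceptibility_bound_general E P hP p hp q hq Sx hSx M θ₀ hM hθ hθlt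

end InhomPerc
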